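/- Let T > 0, M a symmetric positive definite real 3×3 matrix, Γ : ℝ³ × ℝ³ → ℝ³ a symmetric bilinear map, q₀, q₁, q′₁ ∈ ℝ³, and let (q̄, p̄) ∈ C¹([0,T]; ℝ³ × ℝ³) solve M p̄′ + Γ(p̄, p̄) = 0, q̄′ = ℛ(q̄) p̄ with q̄(0) = q₀ and q̄(T) = q₁. Set v₀ := M p̄(0) and v₁ := −M(p̄(T) − q′₁). Then for every ε > 0 there exists η₀ ∈ (0, T/4) such that for every η ∈ (0, η₀) and every continuous β : ℝ → [0, ∞) with support contained in (0, 2η) and ∫ β² = 1, the solution (q̃, p̃) of the toy system M p̃′(t) + Γ(p̃(t), p̃(t)) = β(t)² v₀ + β(T − t)² v₁, q̃′(t) = ℛ(q̃(t)) p̃(t), with q̃(0) = q₀ and p̃(0) = 0, is defined on all of [0,T] and satisfies sup_{t ∈ [2η, T − 2η]} |(q̃, p̃)(t) − (q̄, p̄)(t)| ≤ ε and |(q̃(T), p̃(T)) − (q₁, q′₁)| ≤ ε. -/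

import Mathlib

/-- The map `ℛ(q) p` for `q = (h, ϑ) ∈ ℝ³` and `p = (l, r) ∈ ℝ³`:
`ℛ(q)(l, r) = (R(ϑ) l, r)`, where `R(ϑ)` is the rotation of the plane by the angle
`ϑ = q 2`. -/
noncomputable def solidR (q p : EuclideanSpace ℝ (Fin 3)) : EuclideanSpace ℝ (Fin 3) :=
  WithLp.toLp 2 ![Real.cos (q 2) * p 0 - Real.sin (q 2) * p 1,
    Real.sin (q 2) * p 0 + Real.cos (q 2) * p 1,
    p 2]

open Set Metric Real

section ODEaux

variable {X : Type*} [NormedAddCommGroup X] [NormedSpace ℝ X] [CompleteSpace X]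

/-- The Picard–Lindelöf hypotheses in the form of the older Mathlib structure. -/
structure IsPicardLindelofOld (v : ℝ → X → X) (tMin t₀ tMax : ℝ) (x₀ : X) (L : NNReal)
    (R C : ℝ) : Prop where
  ht₀ : t₀ ∈ Set.Icc tMin tMax
  hR : 0 ≤ R
  lipschitz : ∀ t ∈ Set.Icc tMin tMax, LipschitzOnWith L (v t) (Metric.closedBall x₀ R)
  cont : ∀ x ∈ Metric.closedBall x₀ R, ContinuousOn (fun t => v t x) (Set.Icc tMin tMax)
  norm_le : ∀ t ∈ Set.Icc tMin tMax, ∀ x ∈ Metric.closedBall x₀ R, ‖v t x‖ ≤ C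
  C_mul_le_R : C * max (tMax - t₀) (t₀ - tMin) ≤ R

/-- Picard–Lindelöf with ball membership in the conclusion. -/
theorem pl_exists_mem {v : ℝ → X → X} {tMin t₀ tMax : ℝ} (x₀ : X) {C R : ℝ} {L : NNReal}
    (hpl : IsPicardLindelofOld v tMin t₀ tMax x₀ L R C) :
    ∃ f : ℝ → X, f t₀ = x₀ ∧ ∀ t ∈ Set.Icc tMin tMax,
      f t ∈ Metric.closedBall x₀ R ∧ HasDerivWithinAt f (v t (f t)) (Set.Icc tMin tMax) t := by
  have hC : 0 ≤ C :=
    (norm_nonneg _).trans (hpl.norm_le t₀ hpl.ht₀ x₀ (Metric.mem_closedBall_self hpl.hR))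
  lift C to NNReal using hC
  lift R to NNReal using hpl.hR
  set t₀' : Set.Icc tMin tMax := ⟨t₀, hpl.ht₀⟩ with ht₀'
  have hnew : IsPicardLindelof v t₀' x₀ R 0 C L :=
    { lipschitzOnWith := hpl.lipschitz, continuousOn := hpl.cont, norm_le := hpl.norm_le,
      mul_max_le := by simpa using hpl.C_mul_le_R }
  obtain ⟨α, hα⟩ := ODE.FunSpace.exists_isFixedPt_next hnew (Metric.mem_closedBall_self le_rfl)
  refine ⟨α.compProj, ?_, fun t ht => ⟨α.compProj_mem_closedBall hnew.mul_max_le, ?_⟩⟩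
  · show α.compProj t₀' = x₀
    rw [ODE.FunSpace.compProj_val, ← hα, ODE.FunSpace.next_apply₀]
  · apply ODE.hasDerivWithinAt_picard_Icc t₀'.2 hnew.continuousOn_uncurry
      α.continuous_compProj.continuousOn (fun _ _ => α.compProj_mem_closedBall hnew.mul_max_le)
      x₀ ht |>.congr_of_mem _ ht
    intro t' ht'
    nth_rw 1 [← hα]
    rw [ODE.FunSpace.compProj_of_mem ht', ODE.FunSpace.next_apply]

/-- From a derivative within `Icc a b` to a derivative within `Ici t`. -/
theorem hasDerivWithinAt_Ici_of_Icc {f : ℝ → X} {v : X} {a b t : ℝ} (ht : t ∈ Set.Ico a b)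
    (h : HasDerivWithinAt f v (Set.Icc a b) t) : HasDerivWithinAt f v (Set.Ici t) t :=
  h.mono_of_mem_nhdsWithin (Icc_mem_nhdsGE_of_mem ht)

/-- Glue two solutions of an ODE on adjacent intervals. -/
theorem glue_ode {F : ℝ → X → X} {a b c : ℝ} (hab : a ≤ b) (hbc : b ≤ c) {f g : ℝ → X}
    (hf : ∀ t ∈ Set.Icc a b, HasDerivWithinAt f (F t (f t)) (Set.Icc a b) t)
    (hg : ∀ t ∈ Set.Icc b c, HasDerivWithinAt g (F t (g t)) (Set.Icc b c) t)
    (hfg : f b = g b) :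
    ∃ h : ℝ → X, (∀ t ∈ Set.Icc a b, h t = f t) ∧ (∀ t ∈ Set.Icc b c, h t = g t) ∧
      ∀ t ∈ Set.Icc a c, HasDerivWithinAt h (F t (h t)) (Set.Icc a c) t := by
  classical
  refine ⟨fun t => if t ≤ b then f t else g t, fun t ht => if_pos ht.2, fun t ht => ?_, ?_⟩
  · rcases eq_or_lt_of_le ht.1 with h1 | h1
    · simp [← h1, hfg]
    · simp only [if_neg (not_le.2 h1)]
  · intro t ht
    set h : ℝ → X := fun t => if t ≤ b then f t else g t with hh
    have hfe : Set.EqOn h f (Set.Icc a b) := fun s hs => if_pos hs.2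
    have hge : Set.EqOn h g (Set.Icc b c) := by
      intro s hs
      rcases eq_or_lt_of_le hs.1 with h1 | h1
      · simp [hh, ← h1, hfg]
      · simp [hh, if_neg (not_le.2 h1)]
    have h1 : HasDerivWithinAt h (F t (h t)) (Set.Icc a b) t := by
      rcases le_or_gt t b with htb | htb
      · have := (hf t ⟨ht.1, htb⟩).congr hfe (hfe ⟨ht.1, htb⟩)
        rw [show h t = f t from hfe ⟨ht.1, htb⟩]
        exact this
      · exact (hasDerivWithinAt_iff_hasFDerivWithinAt).2 <|
          HasFDerivWithinAt.of_notMem_closure (by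
            rw [closure_Icc]; exact fun hc => absurd hc.2 (not_le.2 htb))
    have h2 : HasDerivWithinAt h (F t (h t)) (Set.Icc b c) t := by
      rcases lt_or_ge t b with htb | htb
      · exact (hasDerivWithinAt_iff_hasFDerivWithinAt).2 <|
          HasFDerivWithinAt.of_notMem_closure (by
            rw [closure_Icc]; exact fun hc => absurd hc.1 (not_le.2 htb))
      · have := (hg t ⟨htb, ht.2⟩).congr hge (hge ⟨htb, ht.2⟩)
        rw [show h t = g t from hge ⟨htb, ht.2⟩]
        exact this
    have := h1.union h2
    rwa [Set.Icc_union_Icc_eq_Icc hab hbc] at this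

end ODEaux

section Tube

variable {X : Type*} [NormedAddCommGroup X] [NormedSpace ℝ X] [CompleteSpace X]

theorem hasDerivWithinAt_singleton' (f : ℝ → X) (v : X) (t : ℝ) :
    HasDerivWithinAt f v {t} t := by
  rw [hasDerivWithinAt_iff_hasFDerivWithinAt]
  simp only [HasFDerivWithinAt, nhdsWithin_singleton, hasFDerivAtFilter_iff_isLittleO,
    Asymptotics.isLittleO_pure, ContinuousLinearMap.smulRight_apply,
    ContinuousLinearMap.one_apply, sub_self, zero_smul, Filter.prod_pure_pure, map_zero]

/-- Existence of a solution of `x' = F x` in a tube around a reference solution `xb`,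
by iterated Picard–Lindelöf plus Grönwall. -/
theorem tube_exists {F : X → X} {xb : ℝ → X} {t₁ t₂ : ℝ} (h12 : t₁ ≤ t₂)
    {ρ : ℝ} (hρ0 : 0 ≤ ρ) (hρ : ∀ t ∈ Set.Icc t₁ t₂, ‖xb t‖ ≤ ρ)
    (hxb : ∀ t ∈ Set.Icc t₁ t₂, HasDerivWithinAt xb (F (xb t)) (Set.Icc t₁ t₂) t)
    {L : NNReal} (hL : LipschitzOnWith L F (Metric.closedBall (0:X) (ρ+2)))
    {C : ℝ} (hC0 : 0 < C) (hC : ∀ x ∈ Metric.closedBall (0:X) (ρ+2), ‖F x‖ ≤ C)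
    {x₁ : X} {δ : ℝ} (hδ0 : 0 ≤ δ) (hx₁ : ‖x₁ - xb t₁‖ ≤ δ)
    (hsmall : δ * Real.exp (L * (t₂ - t₁)) ≤ 1) :
    ∃ x : ℝ → X, x t₁ = x₁ ∧
      (∀ t ∈ Set.Icc t₁ t₂, HasDerivWithinAt x (F (x t)) (Set.Icc t₁ t₂) t) ∧
      ∀ t ∈ Set.Icc t₁ t₂, ‖x t - xb t‖ ≤ δ * Real.exp (L * (t - t₁)) := by
  set τ : ℝ := 1 / C with hτ
  have hτ0 : 0 < τ := by positivity
  -- the tube bound is at most 1 on the interval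
  have htube1 : ∀ t ∈ Set.Icc t₁ t₂, δ * Real.exp (L * (t - t₁)) ≤ 1 := by
    intro t ht
    refine le_trans ?_ hsmall
    have : Real.exp (L * (t - t₁)) ≤ Real.exp (L * (t₂ - t₁)) := by
      apply Real.exp_le_exp.2
      have : (t : ℝ) - t₁ ≤ t₂ - t₁ := by linarith [ht.2]
      exact mul_le_mul_of_nonneg_left this L.2
    nlinarith [Real.exp_pos (L * (t - t₁))]
  -- induction claim
  have key : ∀ n : ℕ, ∃ x : ℝ → X, x t₁ = x₁ ∧
      (∀ t ∈ Set.Icc t₁ (min t₂ (t₁ + n * τ)),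
        HasDerivWithinAt x (F (x t)) (Set.Icc t₁ (min t₂ (t₁ + n * τ))) t) ∧
      ∀ t ∈ Set.Icc t₁ (min t₂ (t₁ + n * τ)), ‖x t - xb t‖ ≤ δ * Real.exp (L * (t - t₁)) := by
    intro n
    induction n with
    | zero =>
      have e : min t₂ (t₁ + ((0:ℕ):ℝ) * τ) = t₁ := by simp [h12]
      rw [e]
      refine ⟨fun _ => x₁, rfl, ?_, ?_⟩
      · intro t ht
        rw [Set.Icc_self, Set.mem_singleton_iff] at ht
        subst ht
        rw [Set.Icc_self]
        exact hasDerivWithinAt_singleton' _ _ _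
      · intro t ht
        rw [Set.Icc_self, Set.mem_singleton_iff] at ht
        subst ht
        simpa using hx₁
    | succ n ih =>
      rcases ih with ⟨xn, hxn1, hxnD, hxnT⟩
      rcases le_or_gt t₂ (t₁ + n * τ) with hend | hmid
      · -- already reached the end
        have e1 : min t₂ (t₁ + n * τ) = t₂ := min_eq_left hend
        have e2' : t₁ + (((n:ℕ)+1:ℕ):ℝ) * τ = (t₁ + (n:ℝ) * τ) + τ := by push_cast; ring
        have e2 : min t₂ (t₁ + (((n:ℕ)+1:ℕ):ℝ) * τ) = t₂ := by
          rw [e2']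
          exact min_eq_left (by linarith)
        rw [e2]; rw [e1] at hxnD hxnT
        exact ⟨xn, hxn1, hxnD, hxnT⟩
      · -- extend by one step
        set s : ℝ := t₁ + n * τ with hs
        have hmins : min t₂ (t₁ + n * τ) = s := min_eq_right hmid.le
        rw [hmins] at hxnD hxnT
        have hts1 : t₁ ≤ s := by
          have : (0:ℝ) ≤ n * τ := by positivity
          linarith
        set s' : ℝ := min t₂ (s + τ) with hs'
        have hss' : s ≤ s' := le_min hmid.le (by linarith)
        have hs't2 : s' ≤ t₂ := min_le_left _ _
        have hmins' : min t₂ (t₁ + (((n:ℕ)+1:ℕ):ℝ) * τ) = s' := by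
          rw [hs']
          congr 1
          push_cast
          ring
        -- endpoint of the previous solution
        set xe : X := xn s with hxe
        have hsmem : s ∈ Set.Icc t₁ t₂ := ⟨hts1, hmid.le⟩
        have hxeT : ‖xe - xb s‖ ≤ 1 :=
          le_trans (hxnT s ⟨hts1, le_rfl⟩) (htube1 s hsmem)
        have hxen : ‖xe‖ ≤ ρ + 1 := by
          calc ‖xe‖ = ‖(xe - xb s) + xb s‖ := by congr 1; abel
            _ ≤ ‖xe - xb s‖ + ‖xb s‖ := norm_add_le _ _
            _ ≤ 1 + ρ := add_le_add hxeT (hρ s hsmem)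
            _ = ρ + 1 := by ring
        have hball : Metric.closedBall xe 1 ⊆ Metric.closedBall (0:X) (ρ+2) := by
          intro y hy
          rw [Metric.mem_closedBall] at hy ⊢
          rw [dist_zero_right]
          calc ‖y‖ = ‖(y - xe) + xe‖ := by congr 1; abel
            _ ≤ ‖y - xe‖ + ‖xe‖ := norm_add_le _ _
            _ ≤ 1 + (ρ + 1) := by
                refine add_le_add ?_ hxen
                rw [← dist_eq_norm]; exact hy
            _ = ρ + 2 := by ring
        -- Picard–Lindelöf on [s, s']
        have hpl : IsPicardLindelofOld (fun (_ : ℝ) (y : X) => F y) s s s' xe L 1 C := by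
          refine ⟨⟨le_rfl, hss'⟩, zero_le_one, ?_, ?_, ?_, ?_⟩
          · exact fun t _ => hL.mono hball
          · exact fun x _ => continuousOn_const
          · exact fun t _ x hx => hC x (hball hx)
          · have h1 : s' - s ≤ τ := by
              have := min_le_right t₂ (s + τ)
              simp only [hs']
              linarith [min_le_right t₂ (s + τ)]
            have h2 : max (s' - s) (s - s) = s' - s := by
              rw [max_eq_left]; linarith
            rw [h2]
            calc C * (s' - s) ≤ C * τ := by
                  exact mul_le_mul_of_nonneg_left h1 hC0.le
              _ = 1 := by rw [hτ]; field_simp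
        rcases pl_exists_mem xe hpl with ⟨f₂, hf₂1, hf₂⟩
        -- glue
        rcases glue_ode (F := fun (_ : ℝ) y => F y) hts1 hss' hxnD
          (fun t ht => (hf₂ t ht).2) ((hf₂1.trans hxe).symm) with
          ⟨x', hx'f, hx'g, hx'D⟩
        -- tube bound on [t₁, s'] via Grönwall
        have hx'1 : x' t₁ = x₁ := by rw [hx'f t₁ ⟨le_rfl, hts1⟩, hxn1]
        have hmem : ∀ t ∈ Set.Ico t₁ s', x' t ∈ Metric.closedBall (0:X) (ρ + 2) := by
          intro t ht
          rcases le_or_gt t s with hts | hts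
          · have hxf : x' t = xn t := hx'f t ⟨ht.1, hts⟩
            rw [Metric.mem_closedBall, dist_zero_right, hxf]
            have h1 := hxnT t ⟨ht.1, hts⟩
            have h2 := htube1 t ⟨ht.1, le_trans hts hmid.le⟩
            have h3 := hρ t ⟨ht.1, le_trans hts hmid.le⟩
            calc ‖xn t‖ = ‖(xn t - xb t) + xb t‖ := by congr 1; abel
              _ ≤ ‖xn t - xb t‖ + ‖xb t‖ := norm_add_le _ _
              _ ≤ 1 + ρ := add_le_add (le_trans h1 h2) h3
              _ ≤ ρ + 2 := by linarith
          · rw [hx'g t ⟨hts.le, ht.2.le⟩]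
            exact hball (hf₂ t ⟨hts.le, ht.2.le⟩).1
        have hcont : ContinuousOn x' (Set.Icc t₁ s') :=
          fun t ht => (hx'D t ht).continuousWithinAt
        have hcontb : ContinuousOn xb (Set.Icc t₁ s') := by
          intro t ht
          have := (hxb t ⟨ht.1, le_trans ht.2 hs't2⟩).continuousWithinAt
          exact this.mono (Set.Icc_subset_Icc le_rfl hs't2)
        have hgron := dist_le_of_trajectories_ODE_of_mem
          (v := fun (_ : ℝ) y => F y) (s := fun _ => Metric.closedBall (0:X) (ρ+2))
          (K := L) (δ := δ) (fun t _ => hL) hcont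
          (fun t ht => hasDerivWithinAt_Ici_of_Icc ht (hx'D t (Set.Ico_subset_Icc_self ht)))
          hmem hcontb
          (fun t ht => hasDerivWithinAt_Ici_of_Icc ⟨ht.1, lt_of_lt_of_le ht.2 hs't2⟩
            (hxb t ⟨ht.1, le_trans ht.2.le hs't2⟩))
          (fun t ht => by
            rw [Metric.mem_closedBall, dist_zero_right]
            exact le_trans (hρ t ⟨ht.1, le_trans ht.2.le hs't2⟩) (by linarith))
          (by rw [hx'1, dist_eq_norm]; exact hx₁)
        rw [hmins']
        refine ⟨x', hx'1, hx'D, fun t ht => ?_⟩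
        have := hgron t ht
        rwa [dist_eq_norm] at this
  -- conclude: choose n large enough
  rcases exists_nat_ge ((t₂ - t₁) / τ) with ⟨n, hn⟩
  rcases key n with ⟨x, hx1, hxD, hxT⟩
  have : min t₂ (t₁ + n * τ) = t₂ := by
    apply min_eq_left
    rw [div_le_iff₀ hτ0] at hn
    linarith
  rw [this] at hxD hxT
  exact ⟨x, hx1, hxD, hxT⟩

end Tube

section Helpers

/-- A `C¹` map is Lipschitz on closed balls (finite-dimensional domain). -/
theorem lipschitz_of_contDiff {X Y : Type*} [NormedAddCommGroup X] [NormedSpace ℝ X]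
    [FiniteDimensional ℝ X] [NormedAddCommGroup Y] [NormedSpace ℝ Y]
    {f : X → Y} (hf : ContDiff ℝ 1 f) (r : ℝ) :
    ∃ K : NNReal, LipschitzOnWith K f (Metric.closedBall 0 r) := by
  have hcont : ContinuousOn (fderiv ℝ f) (Metric.closedBall (0:X) r) :=
    (hf.continuous_fderiv one_ne_zero).continuousOn
  obtain ⟨c, hc⟩ := (isCompact_closedBall (0:X) r).exists_bound_of_continuousOn hcont
  set c' : ℝ := max c 0 with hc'
  refine ⟨(⟨c', le_max_right _ _⟩ : NNReal), ?_⟩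
  apply (convex_closedBall (0:X) r).lipschitzOnWith_of_nnnorm_hasFDerivWithin_le
    (f' := fun x => fderiv ℝ f x)
    (fun x _ => ((hf.differentiable one_ne_zero) x).hasFDerivAt.hasFDerivWithinAt)
  intro x hx
  change (‖fderiv ℝ f x‖ : ℝ) ≤ c'
  exact le_trans (hc x hx) (le_max_left _ _)

theorem contDiff_solidR :
    ContDiff ℝ 1 (fun x : (EuclideanSpace ℝ (Fin 3)) × (EuclideanSpace ℝ (Fin 3)) =>
      solidR x.1 x.2) := by
  rw [contDiff_euclidean]
  intro i
  have h2 : ContDiff ℝ 1 (fun x : (EuclideanSpace ℝ (Fin 3)) × (EuclideanSpace ℝ (Fin 3)) =>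
      (EuclideanSpace.proj (2 : Fin 3)) x.1) :=
    by exact (EuclideanSpace.proj (2 : Fin 3) : EuclideanSpace ℝ (Fin 3) →L[ℝ] ℝ).contDiff.comp contDiff_fst
  have hp : ∀ j : Fin 3, ContDiff ℝ 1
      (fun x : (EuclideanSpace ℝ (Fin 3)) × (EuclideanSpace ℝ (Fin 3)) =>
        (EuclideanSpace.proj j) x.2) :=
    fun j => by exact (EuclideanSpace.proj j : EuclideanSpace ℝ (Fin 3) →L[ℝ] ℝ).contDiff.comp contDiff_snd
  have hcos : ContDiff ℝ 1 (fun x : (EuclideanSpace ℝ (Fin 3)) × (EuclideanSpace ℝ (Fin 3)) =>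
      Real.cos ((EuclideanSpace.proj (2 : Fin 3)) x.1)) := Real.contDiff_cos.comp h2
  have hsin : ContDiff ℝ 1 (fun x : (EuclideanSpace ℝ (Fin 3)) × (EuclideanSpace ℝ (Fin 3)) =>
      Real.sin ((EuclideanSpace.proj (2 : Fin 3)) x.1)) := Real.contDiff_sin.comp h2
  fin_cases i <;>
    simp only [solidR, Matrix.cons_val_zero, Matrix.cons_val_one, Matrix.head_cons,
      Matrix.cons_val_two, Matrix.tail_cons, Fin.isValue, PiLp.toLp_apply]
  · exact (hcos.mul (hp 0)).sub (hsin.mul (hp 1))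
  · exact (hsin.mul (hp 0)).add (hcos.mul (hp 1))
  · exact hp 2

end Helpers

noncomputable def bilinCLM (Γ : EuclideanSpace ℝ (Fin 3) →ₗ[ℝ] EuclideanSpace ℝ (Fin 3) →ₗ[ℝ]
    EuclideanSpace ℝ (Fin 3)) :
    EuclideanSpace ℝ (Fin 3) →L[ℝ] EuclideanSpace ℝ (Fin 3) →L[ℝ] EuclideanSpace ℝ (Fin 3) :=
  LinearMap.toContinuousLinearMap
    ((LinearMap.toContinuousLinearMap :
        (EuclideanSpace ℝ (Fin 3) →ₗ[ℝ] EuclideanSpace ℝ (Fin 3)) ≃ₗ[ℝ]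
          (EuclideanSpace ℝ (Fin 3) →L[ℝ] EuclideanSpace ℝ (Fin 3))).toLinearMap.comp Γ)

@[simp] lemma bilinCLM_apply (Γ : EuclideanSpace ℝ (Fin 3) →ₗ[ℝ] EuclideanSpace ℝ (Fin 3) →ₗ[ℝ]
    EuclideanSpace ℝ (Fin 3)) (x y : EuclideanSpace ℝ (Fin 3)) :
    bilinCLM Γ x y = Γ x y := by
  simp [bilinCLM]


set_option maxHeartbeats 2000000 in
/-- impulsive-control approximation, displays (25)–(28) of the paper.
Given a `C¹` solution `(q̄, p̄)` of the geodesic system on `[0,T]` joining `q₀` to `q₁`,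
set `v₀ = M p̄(0)` and `v₁ = −M(p̄(T) − q₁′)`.  For every `ε > 0` there is
`η₀ ∈ (0, T/4)` such that for every `η ∈ (0, η₀)` and every continuous nonnegative
`β` supported in `(0, 2η)` with `∫ β² = 1`, the toy system
`M p̃′ + Γ(p̃, p̃) = β(t)² v₀ + β(T−t)² v₁`, `q̃′ = ℛ(q̃) p̃`, `q̃(0) = q₀`, `p̃(0) = 0`
has a solution defined on all of `[0,T]` which is `ε`-close to `(q̄, p̄)` on
`[2η, T − 2η]` and whose final state is `ε`-close to `(q₁, q₁′)`. -/
theorem stmt8 (T : ℝ) (hT : 0 < T)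
    (M : Matrix (Fin 3) (Fin 3) ℝ) (hMs : M.IsSymm) (hMp : M.PosDef)
    (Γ : EuclideanSpace ℝ (Fin 3) →ₗ[ℝ] EuclideanSpace ℝ (Fin 3) →ₗ[ℝ] EuclideanSpace ℝ (Fin 3))
    (hΓ : ∀ p q, Γ p q = Γ q p)
    (q₀ q₁ q₁' : EuclideanSpace ℝ (Fin 3))
    (qbar pbar : ℝ → EuclideanSpace ℝ (Fin 3))
    (hqC1 : ContDiffOn ℝ 1 qbar (Set.Icc 0 T)) (hpC1 : ContDiffOn ℝ 1 pbar (Set.Icc 0 T))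
    (hq : ∀ t ∈ Set.Icc (0:ℝ) T,
      HasDerivWithinAt qbar (solidR (qbar t) (pbar t)) (Set.Icc 0 T) t)
    (hp : ∀ t ∈ Set.Icc (0:ℝ) T, ∃ v,
      HasDerivWithinAt pbar v (Set.Icc 0 T) t ∧
      Matrix.toEuclideanLin M v + Γ (pbar t) (pbar t) = 0)
    (hq0 : qbar 0 = q₀) (hqT : qbar T = q₁) :
    ∀ ε > 0, ∃ η₀ ∈ Set.Ioo (0:ℝ) (T/4), ∀ η ∈ Set.Ioo (0:ℝ) η₀,
      ∀ β : ℝ → ℝ, Continuous β → (∀ t, 0 ≤ β t) →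
        Function.support β ⊆ Set.Ioo 0 (2*η) → (∫ t : ℝ, (β t)^2) = 1 →
      ∃ qt pt : ℝ → EuclideanSpace ℝ (Fin 3),
        qt 0 = q₀ ∧ pt 0 = 0 ∧
        (∀ t ∈ Set.Icc (0:ℝ) T,
          HasDerivWithinAt qt (solidR (qt t) (pt t)) (Set.Icc 0 T) t ∧
          ∃ v, HasDerivWithinAt pt v (Set.Icc 0 T) t ∧
            Matrix.toEuclideanLin M v + Γ (pt t) (pt t)
              = (β t)^2 • Matrix.toEuclideanLin M (pbar 0)
                + (β (T - t))^2 • (-(Matrix.toEuclideanLin M (pbar T - q₁')))) ∧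
        (∀ t ∈ Set.Icc (2*η) (T - 2*η), ‖(qt t - qbar t, pt t - pbar t)‖ ≤ ε) ∧
        ‖(qt T - q₁, pt T - q₁')‖ ≤ ε := by
  intro ε hε
  classical
  -- matrix inverse facts
  have hdet : IsUnit M.det := isUnit_iff_ne_zero.2 (ne_of_gt hMp.det_pos)
  set Ainv : EuclideanSpace ℝ (Fin 3) →L[ℝ] EuclideanSpace ℝ (Fin 3) :=
    LinearMap.toContinuousLinearMap (Matrix.toEuclideanLin M⁻¹) with hAinvdef
  have hAA : ∀ w, Matrix.toEuclideanLin M (Ainv w) = w := by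
    intro w
    simp only [hAinvdef, LinearMap.coe_toContinuousLinearMap', Matrix.toEuclideanLin_apply,
      Equiv.apply_symm_apply, Matrix.mulVec_mulVec, Matrix.mul_nonsing_inv _ hdet,
      Matrix.one_mulVec, Equiv.symm_apply_apply]
  have hAinvA : ∀ w, Ainv (Matrix.toEuclideanLin M w) = w := by
    intro w
    simp only [hAinvdef, LinearMap.coe_toContinuousLinearMap', Matrix.toEuclideanLin_apply,
      Equiv.apply_symm_apply, Matrix.mulVec_mulVec, Matrix.nonsing_inv_mul _ hdet,
      Matrix.one_mulVec, Equiv.symm_apply_apply]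
  set Γc := bilinCLM Γ with hΓcdef
  -- the autonomous vector field
  set G0 : (EuclideanSpace ℝ (Fin 3) × EuclideanSpace ℝ (Fin 3)) →
      (EuclideanSpace ℝ (Fin 3) × EuclideanSpace ℝ (Fin 3)) :=
    fun x => (solidR x.1 x.2, -(Ainv (Γc x.2 x.2))) with hG0def
  have hG0cd : ContDiff ℝ 1 G0 := by
    refine contDiff_solidR.prodMk (ContDiff.neg ?_)
    exact Ainv.contDiff.comp (Γc.isBoundedBilinearMap.contDiff.comp
      (contDiff_snd.prodMk contDiff_snd))
  -- the reference solution
  set xb : ℝ → (EuclideanSpace ℝ (Fin 3) × EuclideanSpace ℝ (Fin 3)) :=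
    fun t => (qbar t, pbar t) with hxbdef
  have hpbar' : ∀ t ∈ Set.Icc (0:ℝ) T,
      HasDerivWithinAt pbar (-(Ainv (Γc (pbar t) (pbar t)))) (Set.Icc 0 T) t := by
    intro t ht
    obtain ⟨v, hv, hveq⟩ := hp t ht
    have h1 : Matrix.toEuclideanLin M v = -(Γ (pbar t) (pbar t)) :=
      eq_neg_of_add_eq_zero_left hveq
    have h2 : v = -(Ainv (Γc (pbar t) (pbar t))) := by
      have h3 := congrArg Ainv h1
      rw [hAinvA, map_neg] at h3
      rw [h3, hΓcdef, bilinCLM_apply]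
    rwa [h2] at hv
  have hxbD : ∀ t ∈ Set.Icc (0:ℝ) T, HasDerivWithinAt xb (G0 (xb t)) (Set.Icc 0 T) t :=
    fun t ht => (hq t ht).prodMk (hpbar' t ht)
  have hxbcont : ContinuousOn xb (Set.Icc 0 T) := fun t ht => (hxbD t ht).continuousWithinAt
  obtain ⟨ρ₀, hρ₀⟩ := isCompact_Icc.exists_bound_of_continuousOn hxbcont
  have hρ₀0 : 0 ≤ ρ₀ := le_trans (norm_nonneg _) (hρ₀ 0 ⟨le_rfl, hT.le⟩)
  set av : EuclideanSpace ℝ (Fin 3) := pbar 0 with havdef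
  set bv : EuclideanSpace ℝ (Fin 3) := q₁' - pbar T with hbvdef
  set ρ : ℝ := ρ₀ + ‖av‖ + ‖bv‖ + 2 with hρdef
  have hρ₀ρ : ρ₀ ≤ ρ := by
    have := norm_nonneg av; have := norm_nonneg bv; rw [hρdef]; linarith
  obtain ⟨L, hL⟩ := lipschitz_of_contDiff hG0cd (ρ + 2)
  obtain ⟨C₁, hC₁⟩ := (isCompact_closedBall
    (0 : EuclideanSpace ℝ (Fin 3) × EuclideanSpace ℝ (Fin 3))
    (ρ+2)).exists_bound_of_continuousOn hG0cd.continuous.continuousOn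
  set C : ℝ := max C₁ 1 with hCdef
  have hC0 : (0:ℝ) < C := lt_of_lt_of_le one_pos (le_max_right _ _)
  have hC : ∀ x ∈ Metric.closedBall (0 : EuclideanSpace ℝ (Fin 3) × EuclideanSpace ℝ (Fin 3))
      (ρ+2), ‖G0 x‖ ≤ C := fun x hx => le_trans (hC₁ x hx) (le_max_left _ _)
  set K : ℝ := Real.exp (L * T) with hKdef
  have hK1 : 1 ≤ K := Real.one_le_exp (by positivity)
  have hK0 : 0 < K := lt_of_lt_of_le one_pos hK1
  -- choice of η₀
  set η₀ : ℝ := min (T/8) (min (1/(2*C)) (min (1/(4*C*K)) (ε/(8*C*(1+K))))) with hη₀def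
  have hη₀pos : 0 < η₀ := by
    refine lt_min (by positivity) (lt_min (by positivity) (lt_min (by positivity) ?_))
    positivity
  refine ⟨η₀, ⟨hη₀pos, lt_of_le_of_lt (min_le_left _ _) (by linarith)⟩, ?_⟩
  intro η hη β hβc hβ0 hβsupp hβint
  obtain ⟨hη0, hηlt⟩ := hη
  have hη8 : η < T/8 := lt_of_lt_of_le hηlt (min_le_left _ _)
  have hηC : 2*C*η ≤ 1 := by
    have h := lt_of_lt_of_le hηlt (le_trans (min_le_right _ _) (min_le_left _ _))
    rw [lt_div_iff₀ (by positivity)] at h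
    linarith
  have hηK : 4*C*K*η ≤ 1 := by
    have h := lt_of_lt_of_le hηlt (le_trans (min_le_right _ _)
      (le_trans (min_le_right _ _) (min_le_left _ _)))
    rw [lt_div_iff₀ (by positivity)] at h
    linarith
  have hηε : 8*C*(1+K)*η ≤ ε := by
    have h := lt_of_lt_of_le hηlt (le_trans (min_le_right _ _)
      (le_trans (min_le_right _ _) (min_le_right _ _)))
    rw [lt_div_iff₀ (by positivity)] at h
    linarith
  have hCη : (0:ℝ) ≤ C*η := mul_nonneg hC0.le hη0.le
  have hCKη : (0:ℝ) ≤ C*K*η := mul_nonneg (mul_nonneg hC0.le hK0.le) hη0.le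
  have h4η : 4*η < T := by linarith
  have h2η2η : 2*η ≤ T - 2*η := by linarith
  -- facts about β
  have hβz : ∀ z : ℝ, z ∉ Set.Ioo (0:ℝ) (2*η) → β z = 0 := by
    intro z hz
    by_contra h
    exact hz (hβsupp (Function.mem_support.2 h))
  have hβ2c : Continuous fun s => β s ^ 2 := hβc.pow 2
  have hβcs : HasCompactSupport fun s : ℝ => β s ^ 2 := by
    apply HasCompactSupport.intro (isCompact_Icc (a := (0:ℝ)) (b := 2*η))
    intro z hz
    have hz' : z ∉ Set.Ioo (0:ℝ) (2*η) := fun hmem => hz (Set.mem_Icc_of_Ioo hmem)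
    simp [hβz z hz']
  have hβint2 : MeasureTheory.Integrable fun s : ℝ => β s ^ 2 :=
    hβ2c.integrable_of_hasCompactSupport hβcs
  -- the primitive of β²
  set B : ℝ → ℝ := fun t => ∫ s in (0:ℝ)..t, β s ^ 2 with hBdef
  have hBd : ∀ t, HasDerivAt B (β t ^ 2) t := fun t =>
    intervalIntegral.integral_hasDerivAt_right hβint2.intervalIntegrable
      hβ2c.stronglyMeasurable.stronglyMeasurableAtFilter hβ2c.continuousAt
  have hBcont : Continuous B := continuous_iff_continuousAt.2 fun t => (hBd t).continuousAt
  have hB0 : B 0 = 0 := intervalIntegral.integral_same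
  have hBnonneg : ∀ t, 0 ≤ t → 0 ≤ B t := fun t ht =>
    intervalIntegral.integral_nonneg ht (fun u _ => sq_nonneg _)
  have hB2η : B (2*η) = 1 := by
    have hsub : Function.support (fun s => β s ^ 2) ⊆ Set.Ioc 0 (2*η) := by
      intro z hz
      have hz' : β z ≠ 0 := fun h0 => by simp [h0] at hz
      exact Set.mem_Ioc.2 ⟨(hβsupp hz').1, le_of_lt (hβsupp hz').2⟩
    show (∫ s in (0:ℝ)..(2*η), β s ^ 2) = 1
    rw [intervalIntegral.integral_eq_integral_of_support_subset hsub]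
    exact hβint
  have hBle : ∀ t ∈ Set.Icc (0:ℝ) (2*η), B t ≤ 1 := by
    intro t ht
    have hadd : (∫ s in (0:ℝ)..t, β s ^ 2) + (∫ s in t..(2*η), β s ^ 2)
        = ∫ s in (0:ℝ)..(2*η), β s ^ 2 :=
      intervalIntegral.integral_add_adjacent_intervals
        hβint2.intervalIntegrable hβint2.intervalIntegrable
    have hpos : 0 ≤ ∫ s in t..(2*η), β s ^ 2 :=
      intervalIntegral.integral_nonneg ht.2 (fun u _ => sq_nonneg _)
    have h1 : B t + (∫ s in t..(2*η), β s ^ 2) = B (2*η) := hadd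
    linarith [hB2η, h1.symm.le, h1.le]
  -- ### Phase 1 : [0, 2η]
  set x₀ : EuclideanSpace ℝ (Fin 3) × EuclideanSpace ℝ (Fin 3) := (q₀, 0) with hx₀def
  have hxb0 : xb 0 = (q₀, av) := by rw [hxbdef]; simp only [hq0, havdef]
  have hx₀ρ : ‖x₀‖ ≤ ρ₀ := by
    have h1 : ‖x₀‖ ≤ ‖xb 0‖ := by
      rw [hxb0, hx₀def, Prod.norm_def, Prod.norm_def]
      simp only [norm_zero]
      exact max_le_max le_rfl (norm_nonneg _)
    exact le_trans h1 (hρ₀ 0 ⟨le_rfl, hT.le⟩)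
  set w1 : ℝ → EuclideanSpace ℝ (Fin 3) × EuclideanSpace ℝ (Fin 3) :=
    fun t => ((0 : EuclideanSpace ℝ (Fin 3)), B t • av) with hw1def
  have hw1n : ∀ t ∈ Set.Icc (0:ℝ) (2*η), ‖w1 t‖ ≤ ‖av‖ := by
    intro t ht
    rw [hw1def]
    simp only [Prod.norm_def, norm_zero, norm_smul]
    have h1 : |B t| ≤ 1 := by
      rw [abs_le]
      exact ⟨by linarith [hBnonneg t ht.1], hBle t ht⟩
    have : ‖B t‖ * ‖av‖ ≤ 1 * ‖av‖ :=
      mul_le_mul_of_nonneg_right (by rwa [Real.norm_eq_abs]) (norm_nonneg _)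
    rw [one_mul] at this
    exact max_le (norm_nonneg _) this
  set V1 : ℝ → (EuclideanSpace ℝ (Fin 3) × EuclideanSpace ℝ (Fin 3)) →
      (EuclideanSpace ℝ (Fin 3) × EuclideanSpace ℝ (Fin 3)) :=
    fun t y => G0 (y + w1 t) with hV1def
  have hmaps1 : ∀ t ∈ Set.Icc (0:ℝ) (2*η), Set.MapsTo (fun y => y + w1 t)
      (Metric.closedBall x₀ 1)
      (Metric.closedBall (0 : EuclideanSpace ℝ (Fin 3) × EuclideanSpace ℝ (Fin 3)) (ρ+2)) := by
    intro t ht y hy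
    rw [Metric.mem_closedBall, dist_zero_right]
    have h1 : ‖y - x₀‖ ≤ 1 := by rw [← dist_eq_norm]; exact hy
    calc ‖y + w1 t‖ = ‖(y - x₀) + x₀ + w1 t‖ := by congr 1; abel
      _ ≤ ‖(y - x₀) + x₀‖ + ‖w1 t‖ := norm_add_le _ _
      _ ≤ ‖y - x₀‖ + ‖x₀‖ + ‖w1 t‖ := by linarith [norm_add_le (y - x₀) x₀]
      _ ≤ 1 + ρ₀ + ‖av‖ := by linarith [hw1n t ht, hx₀ρ]
      _ ≤ ρ + 2 := by rw [hρdef]; linarith [norm_nonneg bv]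
  have hw1cont : Continuous w1 := continuous_const.prodMk (hBcont.smul continuous_const)
  have hpl1 : IsPicardLindelofOld V1 0 0 (2*η) x₀ L 1 C := by
    refine ⟨⟨le_rfl, by linarith⟩, zero_le_one, ?_, ?_, ?_, ?_⟩
    · intro t ht
      have hlip1 : LipschitzOnWith 1 (fun y => y + w1 t) (Metric.closedBall x₀ 1) := by
        rw [lipschitzOnWith_iff_dist_le_mul]
        intro x _ y _
        rw [dist_add_right]
        simp
      have h := hL.comp hlip1 (hmaps1 t ht)
      rw [mul_one] at h
      exact h
    · intro x hx
      exact (hG0cd.continuous.comp (continuous_const.add hw1cont)).continuousOn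
    · intro t ht x hx
      exact hC _ (hmaps1 t ht hx)
    · have hmax : max (2*η - 0) (0 - 0) = 2*η := by
        rw [max_eq_left] <;> linarith
      rw [hmax]
      linarith [hηC]
  obtain ⟨y1, hy10, hy1⟩ := pl_exists_mem x₀ hpl1
  set x1 : ℝ → EuclideanSpace ℝ (Fin 3) × EuclideanSpace ℝ (Fin 3) :=
    fun t => y1 t + w1 t with hx1def
  have hw1d : ∀ t, HasDerivAt w1 ((0 : EuclideanSpace ℝ (Fin 3)), β t ^ 2 • av) t :=
    fun t => (hasDerivAt_const t (0 : EuclideanSpace ℝ (Fin 3))).prodMk ((hBd t).smul_const av)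
  have hx1D : ∀ t ∈ Set.Icc (0:ℝ) (2*η), HasDerivWithinAt x1
      (G0 (x1 t) + ((0 : EuclideanSpace ℝ (Fin 3)), β t ^ 2 • av)) (Set.Icc 0 (2*η)) t :=
    fun t ht => ((hy1 t ht).2.add (hw1d t).hasDerivWithinAt)
  -- the full (time-dependent) vector field of the toy system
  set FF : ℝ → (EuclideanSpace ℝ (Fin 3) × EuclideanSpace ℝ (Fin 3)) →
      (EuclideanSpace ℝ (Fin 3) × EuclideanSpace ℝ (Fin 3)) :=
    fun t x => (solidR x.1 x.2,
      (β t ^ 2 • av + β (T - t) ^ 2 • bv) - Ainv (Γc x.2 x.2)) with hFFdef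
  have hβTt : ∀ t : ℝ, t ≤ T - 2*η → β (T - t) = 0 := by
    intro t ht
    apply hβz
    rintro ⟨h1, h2⟩
    linarith
  have hβt0 : ∀ t : ℝ, 2*η ≤ t → β t = 0 := by
    intro t ht
    apply hβz
    rintro ⟨h1, h2⟩
    linarith
  have hFFG0 : ∀ (t : ℝ) (x : EuclideanSpace ℝ (Fin 3) × EuclideanSpace ℝ (Fin 3)),
      t ∈ Set.Icc (2*η) (T - 2*η) → FF t x = G0 x := by
    intro t x ht
    rw [hFFdef, hG0def]
    simp only [hβt0 t ht.1, hβTt t ht.2]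
    refine Prod.ext rfl ?_
    simp
  have hx1FF : ∀ t ∈ Set.Icc (0:ℝ) (2*η), HasDerivWithinAt x1 (FF t (x1 t))
      (Set.Icc 0 (2*η)) t := by
    intro t ht
    have heq : FF t (x1 t) = G0 (x1 t) + ((0 : EuclideanSpace ℝ (Fin 3)), β t ^ 2 • av) := by
      have hz : β (T - t) = 0 := hβTt t (by linarith [ht.2])
      refine Prod.ext ?_ ?_
      · show solidR (x1 t).1 (x1 t).2 = solidR (x1 t).1 (x1 t).2 + 0
        rw [add_zero]
      · show (β t ^ 2 • av + β (T-t) ^ 2 • bv) - Ainv (Γc (x1 t).2 (x1 t).2)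
            = -(Ainv (Γc (x1 t).2 (x1 t).2)) + β t ^ 2 • av
        rw [hz, zero_pow, zero_smul, add_zero, sub_eq_add_neg, add_comm]
        norm_num
    rw [heq]
    exact hx1D t ht
  -- values of x1
  have hx10 : x1 0 = x₀ := by
    rw [hx1def]
    simp only [hy10, hw1def, hB0, zero_smul]
    rw [hx₀def]
    refine Prod.ext (by simp) (by simp)
  have hx12η : x1 (2*η) = y1 (2*η) + ((0 : EuclideanSpace ℝ (Fin 3)), av) := by
    rw [hx1def]
    simp only [hw1def, hB2η, one_smul]
  -- estimates at time 2η
  have h2ηIcc : (2*η) ∈ Set.Icc (0:ℝ) (2*η) := ⟨by linarith, le_rfl⟩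
  have hy1dist : ‖y1 (2*η) - x₀‖ ≤ C * (2*η) := by
    have hbd := norm_image_sub_le_of_norm_deriv_le_segment'
      (f := y1) (a := 0) (b := 2*η) (C := C)
      (fun t ht => (hy1 t ht).2)
      (fun t ht => hC _ (hmaps1 t (Set.Ico_subset_Icc_self ht) (hy1 t
        (Set.Ico_subset_Icc_self ht)).1))
      (2*η) h2ηIcc
    rw [hy10] at hbd
    simpa using hbd
  have hxbseg : ∀ u v : ℝ, 0 ≤ u → u ≤ v → v ≤ T → ‖xb v - xb u‖ ≤ C * (v - u) := by
    intro u v hu huv hvT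
    have hbd := norm_image_sub_le_of_norm_deriv_le_segment'
      (f := xb) (a := u) (b := v) (C := C)
      (fun t ht => (hxbD t ⟨le_trans hu ht.1, le_trans ht.2 hvT⟩).mono
        (Set.Icc_subset_Icc hu hvT))
      (fun t ht => by
        refine hC _ ?_
        rw [Metric.mem_closedBall, dist_zero_right]
        exact le_trans (hρ₀ t ⟨le_trans hu ht.1, le_trans ht.2.le hvT⟩) (by linarith [hρ₀ρ]))
      v ⟨huv, le_rfl⟩
    exact hbd
  have hδ1 : ‖x1 (2*η) - xb (2*η)‖ ≤ 4*C*η := by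
    have hsplit : x1 (2*η) - xb (2*η)
        = (y1 (2*η) - x₀) + (xb 0 - xb (2*η)) := by
      rw [hx12η, hxb0, hx₀def]
      have hmk : ((q₀, av) : EuclideanSpace ℝ (Fin 3) × EuclideanSpace ℝ (Fin 3))
          = (q₀, (0 : EuclideanSpace ℝ (Fin 3))) + ((0 : EuclideanSpace ℝ (Fin 3)), av) := by
        refine Prod.ext (by simp) (by simp)
      rw [hmk]
      abel
    rw [hsplit]
    have h2 : ‖xb 0 - xb (2*η)‖ ≤ C * (2*η) := by
      rw [norm_sub_rev]
      have := hxbseg 0 (2*η) le_rfl (by linarith) (by linarith)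
      simpa using this
    calc ‖(y1 (2*η) - x₀) + (xb 0 - xb (2*η))‖
        ≤ ‖y1 (2*η) - x₀‖ + ‖xb 0 - xb (2*η)‖ := norm_add_le _ _
      _ ≤ C * (2*η) + C * (2*η) := add_le_add hy1dist h2
      _ = 4*C*η := by ring
  -- ### Phase 2 : [2η, T-2η], via the tube lemma
  have hδ0' : (0:ℝ) ≤ 4*C*η := by positivity
  have hsm : (4*C*η) * Real.exp (L * (T - 2*η - 2*η)) ≤ 1 := by
    have hexp : Real.exp (L * (T - 2*η - 2*η)) ≤ K := by
      rw [hKdef]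
      apply Real.exp_le_exp.2
      have : (T - 2*η - 2*η) ≤ T := by linarith
      exact mul_le_mul_of_nonneg_left this L.2
    calc (4*C*η) * Real.exp (L * (T - 2*η - 2*η)) ≤ (4*C*η) * K :=
          mul_le_mul_of_nonneg_left hexp (by positivity)
      _ = 4*C*K*η := by ring
      _ ≤ 1 := hηK
  obtain ⟨x2, hx2i, hx2D, hx2T⟩ := tube_exists (F := G0) (xb := xb) (t₁ := 2*η) (t₂ := T - 2*η)
    (by linarith) (by rw [hρdef]; positivity)
    (fun t ht => le_trans (hρ₀ t ⟨by linarith [ht.1], by linarith [ht.2]⟩) hρ₀ρ)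
    (fun t ht => (hxbD t ⟨by linarith [ht.1], by linarith [ht.2]⟩).mono
      (Set.Icc_subset_Icc (by linarith) (by linarith)))
    hL hC0 hC hδ0' hδ1 hsm
  have hx2tube : ∀ t ∈ Set.Icc (2*η) (T - 2*η), ‖x2 t - xb t‖ ≤ 4*C*K*η := by
    intro t ht
    refine le_trans (hx2T t ht) ?_
    have hexp : Real.exp (L * (t - 2*η)) ≤ K := by
      rw [hKdef]
      apply Real.exp_le_exp.2
      have : (t - 2*η) ≤ T := by linarith [ht.2]
      exact mul_le_mul_of_nonneg_left this L.2
    calc (4*C*η) * Real.exp (L * (t - 2*η)) ≤ (4*C*η) * K :=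
          mul_le_mul_of_nonneg_left hexp (by positivity)
      _ = 4*C*K*η := by ring
  have hx2FF : ∀ t ∈ Set.Icc (2*η) (T - 2*η), HasDerivWithinAt x2 (FF t (x2 t))
      (Set.Icc (2*η) (T - 2*η)) t := by
    intro t ht
    rw [hFFG0 t (x2 t) ht]
    exact hx2D t ht
  -- ### Phase 3 : [T-2η, T]
  have hu3c : Continuous fun s : ℝ => β (T - s) ^ 2 :=
    ((hβc.comp (continuous_const.sub continuous_id)).pow 2)
  have hu3cs : HasCompactSupport fun s : ℝ => β (T - s) ^ 2 := by
    apply HasCompactSupport.intro (isCompact_Icc (a := T - 2*η) (b := T))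
    intro z hz
    have hz' : T - z ∉ Set.Ioo (0:ℝ) (2*η) := by
      rintro ⟨h1, h2⟩
      rw [Set.mem_Icc] at hz
      push_neg at hz
      rcases le_or_gt (T - 2*η) z with h3 | h3
      · linarith [hz h3]
      · linarith
    simp [hβz _ hz']
  have hu3int : MeasureTheory.Integrable fun s : ℝ => β (T - s) ^ 2 :=
    hu3c.integrable_of_hasCompactSupport hu3cs
  set C3 : ℝ → ℝ := fun t => ∫ s in (T - 2*η)..t, β (T - s) ^ 2 with hC3def
  have hC3d : ∀ t, HasDerivAt C3 (β (T - t) ^ 2) t := fun t =>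
    intervalIntegral.integral_hasDerivAt_right hu3int.intervalIntegrable
      hu3c.stronglyMeasurable.stronglyMeasurableAtFilter hu3c.continuousAt
  have hC3cont : Continuous C3 := continuous_iff_continuousAt.2 fun t => (hC3d t).continuousAt
  have hC30 : C3 (T - 2*η) = 0 := intervalIntegral.integral_same
  have hC3T : C3 T = 1 := by
    have h := intervalIntegral.integral_comp_sub_left (a := T - 2*η) (b := T)
      (fun s => β s ^ 2) T
    rw [show T - T = (0:ℝ) from by ring, show T - (T - 2*η) = 2*η from by ring] at h
    exact h.trans hB2η
  have hC3nonneg : ∀ t ∈ Set.Icc (T - 2*η) T, 0 ≤ C3 t := fun t ht =>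
    intervalIntegral.integral_nonneg ht.1 (fun u _ => sq_nonneg _)
  have hC3le : ∀ t ∈ Set.Icc (T - 2*η) T, C3 t ≤ 1 := by
    intro t ht
    have hadd : (∫ s in (T - 2*η)..t, β (T - s) ^ 2) + (∫ s in t..T, β (T - s) ^ 2)
        = ∫ s in (T - 2*η)..T, β (T - s) ^ 2 :=
      intervalIntegral.integral_add_adjacent_intervals
        hu3int.intervalIntegrable hu3int.intervalIntegrable
    have hpos : 0 ≤ ∫ s in t..T, β (T - s) ^ 2 :=
      intervalIntegral.integral_nonneg ht.2 (fun u _ => sq_nonneg _)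
    have h1 : C3 t + (∫ s in t..T, β (T - s) ^ 2) = C3 T := hadd
    linarith [hC3T, h1.le, h1.symm.le]
  set x₀3 : EuclideanSpace ℝ (Fin 3) × EuclideanSpace ℝ (Fin 3) := x2 (T - 2*η) with hx₀3def
  have hT2ηIcc : (T - 2*η) ∈ Set.Icc (2*η) (T - 2*η) := ⟨by linarith, le_rfl⟩
  have hx03n : ‖x₀3‖ ≤ ρ₀ + 1 := by
    have h1 : ‖x₀3 - xb (T - 2*η)‖ ≤ 4*C*K*η := hx2tube _ hT2ηIcc
    have h2 : ‖xb (T - 2*η)‖ ≤ ρ₀ := hρ₀ _ ⟨by linarith, by linarith⟩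
    calc ‖x₀3‖ = ‖(x₀3 - xb (T - 2*η)) + xb (T - 2*η)‖ := by congr 1; abel
      _ ≤ ‖x₀3 - xb (T - 2*η)‖ + ‖xb (T - 2*η)‖ := norm_add_le _ _
      _ ≤ 4*C*K*η + ρ₀ := add_le_add h1 h2
      _ ≤ ρ₀ + 1 := by linarith [hηK]
  set w3 : ℝ → EuclideanSpace ℝ (Fin 3) × EuclideanSpace ℝ (Fin 3) :=
    fun t => ((0 : EuclideanSpace ℝ (Fin 3)), C3 t • bv) with hw3def
  have hw3n : ∀ t ∈ Set.Icc (T - 2*η) T, ‖w3 t‖ ≤ ‖bv‖ := by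
    intro t ht
    rw [hw3def]
    simp only [Prod.norm_def, norm_zero, norm_smul]
    have h1 : ‖C3 t‖ ≤ 1 := by
      rw [Real.norm_eq_abs, abs_le]
      exact ⟨by linarith [hC3nonneg t ht], hC3le t ht⟩
    have h2 : ‖C3 t‖ * ‖bv‖ ≤ 1 * ‖bv‖ := mul_le_mul_of_nonneg_right h1 (norm_nonneg _)
    rw [one_mul] at h2
    exact max_le (norm_nonneg _) h2
  set V3 : ℝ → (EuclideanSpace ℝ (Fin 3) × EuclideanSpace ℝ (Fin 3)) →
      (EuclideanSpace ℝ (Fin 3) × EuclideanSpace ℝ (Fin 3)) :=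
    fun t y => G0 (y + w3 t) with hV3def
  have hmaps3 : ∀ t ∈ Set.Icc (T - 2*η) T, Set.MapsTo (fun y => y + w3 t)
      (Metric.closedBall x₀3 1)
      (Metric.closedBall (0 : EuclideanSpace ℝ (Fin 3) × EuclideanSpace ℝ (Fin 3)) (ρ+2)) := by
    intro t ht y hy
    rw [Metric.mem_closedBall, dist_zero_right]
    have h1 : ‖y - x₀3‖ ≤ 1 := by rw [← dist_eq_norm]; exact hy
    calc ‖y + w3 t‖ = ‖(y - x₀3) + x₀3 + w3 t‖ := by congr 1; abel
      _ ≤ ‖(y - x₀3) + x₀3‖ + ‖w3 t‖ := norm_add_le _ _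
      _ ≤ ‖y - x₀3‖ + ‖x₀3‖ + ‖w3 t‖ := by linarith [norm_add_le (y - x₀3) x₀3]
      _ ≤ 1 + (ρ₀ + 1) + ‖bv‖ := by linarith [hw3n t ht, hx03n]
      _ ≤ ρ + 2 := by rw [hρdef]; linarith [norm_nonneg av]
  have hw3cont : Continuous w3 := continuous_const.prodMk (hC3cont.smul continuous_const)
  have hpl3 : IsPicardLindelofOld V3 (T - 2*η) (T - 2*η) T x₀3 L 1 C := by
    refine ⟨⟨le_rfl, by linarith⟩, zero_le_one, ?_, ?_, ?_, ?_⟩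
    · intro t ht
      have hlip1 : LipschitzOnWith 1 (fun y => y + w3 t) (Metric.closedBall x₀3 1) := by
        rw [lipschitzOnWith_iff_dist_le_mul]
        intro x _ y _
        rw [dist_add_right]
        simp
      have h := hL.comp hlip1 (hmaps3 t ht)
      rw [mul_one] at h
      exact h
    · intro x hx
      exact (hG0cd.continuous.comp (continuous_const.add hw3cont)).continuousOn
    · intro t ht x hx
      exact hC _ (hmaps3 t ht hx)
    · have hmax : max (T - (T - 2*η)) ((T - 2*η) - (T - 2*η)) = 2*η := by
        rw [show T - (T - 2*η) = 2*η from by ring, show (T - 2*η) - (T - 2*η) = 0 from by ring]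
        rw [max_eq_left] <;> linarith
      rw [hmax]
      linarith [hηC]
  obtain ⟨y3, hy30, hy3⟩ := pl_exists_mem x₀3 hpl3
  set x3 : ℝ → EuclideanSpace ℝ (Fin 3) × EuclideanSpace ℝ (Fin 3) :=
    fun t => y3 t + w3 t with hx3def
  have hw3d : ∀ t, HasDerivAt w3 ((0 : EuclideanSpace ℝ (Fin 3)), β (T - t) ^ 2 • bv) t :=
    fun t => (hasDerivAt_const t (0 : EuclideanSpace ℝ (Fin 3))).prodMk ((hC3d t).smul_const bv)
  have hx3i : x3 (T - 2*η) = x₀3 := by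
    rw [hx3def]
    simp only [hy30, hw3def, hC30, zero_smul]
    refine Prod.ext (by simp) (by simp)
  have hx3FF : ∀ t ∈ Set.Icc (T - 2*η) T, HasDerivWithinAt x3 (FF t (x3 t))
      (Set.Icc (T - 2*η) T) t := by
    intro t ht
    have hD : HasDerivWithinAt x3
        (G0 (x3 t) + ((0 : EuclideanSpace ℝ (Fin 3)), β (T - t) ^ 2 • bv))
        (Set.Icc (T - 2*η) T) t := (hy3 t ht).2.add (hw3d t).hasDerivWithinAt
    have heq : FF t (x3 t) = G0 (x3 t)
        + ((0 : EuclideanSpace ℝ (Fin 3)), β (T - t) ^ 2 • bv) := by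
      have hz : β t = 0 := hβt0 t (by linarith [ht.1])
      refine Prod.ext ?_ ?_
      · show solidR (x3 t).1 (x3 t).2 = solidR (x3 t).1 (x3 t).2 + 0
        rw [add_zero]
      · show (β t ^ 2 • av + β (T - t) ^ 2 • bv) - Ainv (Γc (x3 t).2 (x3 t).2)
            = -(Ainv (Γc (x3 t).2 (x3 t).2)) + β (T - t) ^ 2 • bv
        rw [hz, zero_pow, zero_smul, zero_add, sub_eq_add_neg, add_comm]
        norm_num
    rw [heq]
    exact hD
  -- ### Gluing the three phases
  obtain ⟨x12, hx12f, hx12g, hx12D⟩ := glue_ode (F := FF) (a := 0) (b := 2*η) (c := T - 2*η)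
    (by linarith) h2η2η hx1FF hx2FF hx2i.symm
  obtain ⟨x, hxf, hxg, hxD⟩ := glue_ode (F := FF) (a := 0) (b := T - 2*η) (c := T)
    (by linarith) (by linarith) hx12D hx3FF
    (by rw [hx12g (T - 2*η) hT2ηIcc]; exact hx3i.symm)
  have hx0 : x 0 = x₀ := by
    rw [hxf 0 ⟨le_rfl, by linarith⟩, hx12f 0 ⟨le_rfl, by linarith⟩, hx10]
  refine ⟨fun t => (x t).1, fun t => (x t).2, ?_, ?_, ?_, ?_, ?_⟩
  · show (x 0).1 = q₀
    rw [hx0]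
  · show (x 0).2 = 0
    rw [hx0]
  · -- the ODE
    intro t ht
    have hd := hxD t ht
    constructor
    · exact (ContinuousLinearMap.fst ℝ (EuclideanSpace ℝ (Fin 3))
        (EuclideanSpace ℝ (Fin 3))).hasFDerivAt.comp_hasDerivWithinAt t hd
    · refine ⟨(β t ^ 2 • av + β (T - t) ^ 2 • bv) - Ainv (Γc ((x t).2) ((x t).2)), ?_, ?_⟩
      · exact (ContinuousLinearMap.snd ℝ (EuclideanSpace ℝ (Fin 3))
          (EuclideanSpace ℝ (Fin 3))).hasFDerivAt.comp_hasDerivWithinAt t hd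
      · rw [map_sub, map_add, LinearMap.map_smul, LinearMap.map_smul, hAA,
          hΓcdef, bilinCLM_apply]
        have hbveq : -(Matrix.toEuclideanLin M (pbar T - q₁')) = Matrix.toEuclideanLin M bv := by
          rw [hbvdef, ← map_neg, neg_sub]
        rw [hbveq]
        abel
  · -- closeness on the middle interval
    intro t ht
    have hxeq : x t = x2 t := by
      rw [hxf t ⟨by linarith [ht.1], ht.2⟩, hx12g t ht]
    calc ‖((x t).1 - qbar t, (x t).2 - pbar t)‖ = ‖x t - xb t‖ := rfl
      _ = ‖x2 t - xb t‖ := by rw [hxeq]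
      _ ≤ 4*C*K*η := hx2tube t ht
      _ ≤ ε := by linarith [hηε, hCη, hCKη]
  · -- closeness at the final time
    have hxT3 : x T = x3 T := hxg T ⟨by linarith, le_rfl⟩
    have hx3T : x3 T = y3 T + ((0 : EuclideanSpace ℝ (Fin 3)), bv) := by
      rw [hx3def]
      simp only [hw3def, hC3T, one_smul]
    have hy3seg : ‖y3 T - x₀3‖ ≤ C * (2*η) := by
      have hbd := norm_image_sub_le_of_norm_deriv_le_segment'
        (f := y3) (a := T - 2*η) (b := T) (C := C)
        (fun u hu => (hy3 u hu).2)
        (fun u hu => hC _ (hmaps3 u (Set.Ico_subset_Icc_self hu) (hy3 u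
          (Set.Ico_subset_Icc_self hu)).1))
        T ⟨by linarith, le_rfl⟩
      rw [hy30, show T - (T - 2*η) = 2*η from by ring] at hbd
      exact hbd
    have h2 : ‖x₀3 - xb (T - 2*η)‖ ≤ 4*C*K*η := hx2tube (T - 2*η) hT2ηIcc
    have h3 : ‖xb (T - 2*η) - xb T‖ ≤ C * (2*η) := by
      rw [norm_sub_rev]
      have hbd := hxbseg (T - 2*η) T (by linarith) (by linarith) le_rfl
      rw [show T - (T - 2*η) = 2*η from by ring] at hbd
      exact hbd
    have htarget : ((q₁, q₁') : EuclideanSpace ℝ (Fin 3) × EuclideanSpace ℝ (Fin 3))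
        = xb T + ((0 : EuclideanSpace ℝ (Fin 3)), bv) := by
      refine Prod.ext ?_ ?_
      · show q₁ = qbar T + 0
        rw [hqT, add_zero]
      · show q₁' = pbar T + bv
        rw [hbvdef]
        abel
    have hrw : (((x T).1 - q₁, (x T).2 - q₁') :
        EuclideanSpace ℝ (Fin 3) × EuclideanSpace ℝ (Fin 3)) = x T - (q₁, q₁') := rfl
    rw [hrw, hxT3, hx3T, htarget]
    have hsimp : (y3 T + ((0 : EuclideanSpace ℝ (Fin 3)), bv))
          - (xb T + ((0 : EuclideanSpace ℝ (Fin 3)), bv))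
        = (y3 T - x₀3) + (x₀3 - xb (T - 2*η)) + (xb (T - 2*η) - xb T) := by abel
    rw [hsimp]
    calc ‖(y3 T - x₀3) + (x₀3 - xb (T - 2*η)) + (xb (T - 2*η) - xb T)‖
        ≤ ‖(y3 T - x₀3) + (x₀3 - xb (T - 2*η))‖ + ‖xb (T - 2*η) - xb T‖ := norm_add_le _ _
      _ ≤ ‖y3 T - x₀3‖ + ‖x₀3 - xb (T - 2*η)‖ + ‖xb (T - 2*η) - xb T‖ := by
          linarith [norm_add_le (y3 T - x₀3) (x₀3 - xb (T - 2*η))]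
      _ ≤ C * (2*η) + 4*C*K*η + C * (2*η) := by linarith [hy3seg, h2, h3]
      _ ≤ ε := by linarith [hηε, hCη, hCKη]
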